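/- arXiv:1610.05445 — 3 statements merged into one kernel-verified Lean document; each statement's English description precedes it below -/
import Mathlib

section
/- For every k, Ramsey's theorem for pairs and k colors implies the Adjacent Hindman Theorem for k colors: for every coloring c : ℕ → Fin k, there exists a strictly increasing apart sequence h : ℕ → ℕ and a color d such that every sum of adjacent elements h i + h(i+1) + ... + h j (i ≤ j) has color d. -/
/-- λ(n): the 2-adic valuation of n (least exponent in binary expansion). -/
def lam (n : ℕ) : ℕ := padicValNat 2 n

/-- μ(n): ⌊log₂ n⌋ (greatest exponent in binary expansion). -/
def mu (n : ℕ) : ℕ := Nat.log 2 n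

/-- Apartness condition for a sequence. -/
def Apart (h : ℕ → ℕ) : Prop := ∀ i j, i < j → mu (h i) < lam (h j)

/-- Sum of adjacent elements h i + h (i+1) + ... + h j. -/
def adjSum (h : ℕ → ℕ) (i j : ℕ) : ℕ := ∑ t ∈ Finset.Icc i j, h t

/-!
Colour a pair `x < y` by `c (2^y - 2^x)` and take an infinite homogeneous set
`e 0 < e 1 < ⋯` from Ramsey's theorem. The block `h t = 2^(e (t+1)) - 2^(e t)` has binary
digits exactly `e t, …, e (t+1) - 1`, so the blocks are apart, and the sum of the
adjacent blocks `i, …, j` telescopes to `2^(e (j+1)) - 2^(e i)`, which has the homogeneous colour.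
-/

lemma lam_two_pow_sub_two_pow {a b : ℕ} (hab : a < b) : lam (2 ^ b - 2 ^ a) = a := by
  have : Fact (Nat.Prime 2) := ⟨Nat.prime_two⟩
  have hfac : 2 ^ b - 2 ^ a = 2 ^ a * (2 ^ (b - a) - 1) := by
    rw [Nat.mul_sub, mul_one, ← pow_add, Nat.add_sub_cancel' hab.le]
  have hodd : Odd (2 ^ (b - a) - 1) :=
    Nat.Even.sub_odd Nat.one_le_two_pow ((Nat.even_pow' (by omega)).2 even_two) odd_one
  rw [lam, hfac, padicValNat.mul (by positivity) hodd.pos.ne', padicValNat.prime_pow,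
    padicValNat.eq_zero_of_not_dvd (Nat.not_even_iff_odd.2 hodd ∘ even_iff_two_dvd.2), add_zero]

lemma mu_two_pow_sub_two_pow {a b : ℕ} (hab : a < b) : mu (2 ^ b - 2 ^ a) = b - 1 := by
  obtain ⟨m, rfl⟩ : ∃ m, b = m + 1 := ⟨b - 1, by omega⟩
  have ha : 2 ^ a ≤ 2 ^ m := Nat.pow_le_pow_right two_pos (by omega)
  have hpos : 0 < 2 ^ a := Nat.two_pow_pos a
  rw [Nat.add_sub_cancel]
  refine Nat.log_eq_of_pow_le_of_lt_pow ?_ ?_ <;> rw [pow_succ] <;> omega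

lemma adjSum_tsub {g : ℕ → ℕ} (hg : Monotone g) {i j : ℕ} (hij : i ≤ j) :
    adjSum (fun t => g (t + 1) - g t) i j = g (j + 1) - g i := by
  induction j, hij using Nat.le_induction with
  | base => simp [adjSum]
  | succ j hij ih =>
    rw [adjSum] at ih ⊢
    rw [Finset.sum_Icc_succ_top (by omega), ih]
    have := hg (show i ≤ j + 1 by omega)
    have := hg (show j + 1 ≤ j + 1 + 1 by omega)
    omega

lemma Apart.strictMono {h : ℕ → ℕ} (hpos : ∀ i, 0 < h i) (hapart : Apart h) : StrictMono h := by
  intro i j hij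
  calc h i < 2 ^ (mu (h i) + 1) := Nat.lt_pow_succ_log_self one_lt_two _
    _ ≤ 2 ^ lam (h j) := Nat.pow_le_pow_right two_pos (hapart i j hij)
    _ ≤ h j := Nat.le_of_dvd (hpos j) pow_padicValNat_dvd

lemma apart_two_pow_sub_two_pow {e : ℕ → ℕ} (he : StrictMono e) :
    Apart fun t => 2 ^ e (t + 1) - 2 ^ e t := by
  intro i j hij
  rw [mu_two_pow_sub_two_pow (he i.lt_succ_self), lam_two_pow_sub_two_pow (he j.lt_succ_self)]
  have := he.monotone (Nat.succ_le_of_lt hij)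
  have := he i.lt_succ_self
  omega

theorem rt2k_implies_ahtk (k : ℕ)
    (ramsey : ∀ f : ℕ → ℕ → Fin k, ∃ J : Set ℕ, J.Infinite ∧
      ∃ d : Fin k, ∀ x ∈ J, ∀ y ∈ J, x < y → f x y = d) :
    ∀ c : ℕ → Fin k, ∃ h : ℕ → ℕ, StrictMono h ∧ (∀ i, 0 < h i) ∧ Apart h ∧
      ∃ d : Fin k, ∀ i j, i ≤ j → c (adjSum h i j) = d := by
  intro c
  obtain ⟨J, hJ, d, hd⟩ := ramsey fun x y => c (2 ^ y - 2 ^ x)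
  set e := Nat.nth (· ∈ J)
  have heJ : ∀ n, e n ∈ J := Nat.nth_mem_of_infinite hJ
  have he : StrictMono e := Nat.nth_strictMono hJ
  have hpos : ∀ t, 0 < 2 ^ e (t + 1) - 2 ^ e t := fun t =>
    Nat.sub_pos_of_lt (Nat.pow_lt_pow_right one_lt_two (he t.lt_succ_self))
  have hapart := apart_two_pow_sub_two_pow he
  refine ⟨_, hapart.strictMono hpos, hpos, hapart, d, fun i j hij => ?_⟩
  rw [adjSum_tsub (fun _ _ hab => Nat.pow_le_pow_right two_pos (he.monotone hab)) hij]
  exact hd _ (heJ i) _ (heJ (j + 1)) (he (by omega))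
end

section
/- Given a coloring c : ℕ → Fin 2 and an infinite homogeneous set J = {j_1 < j_2 < ...} for the induced pair-coloring f(i,j) := c(2^{i+1} + 2^{i+2} + ... + 2^j), the set H = {2^{j_1+1} + ... + 2^{j_2}, 2^{j_2+1} + ... + 2^{j_3}, ...} satisfies: every finite sum of adjacent elements of H has the same c-color, and H satisfies the apartness condition. -/
/-!
A block `2^(a+1) + ⋯ + 2^b` has lowest binary digit `a + 1` and highest binary digit `b`.
Hence consecutive blocks cut out at `j₁ < j₂ < ⋯` are apart, and a run of adjacent blocks
telescopes into the single block from `j_i` to `j_{k+1}`, whose colour is the homogeneous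
colour of `J`.
-/

open Finset

lemma lam_le_mu (n : ℕ) : lam n ≤ mu n := padicValNat_le_nat_log n

theorem Apart.strictMono_s5 {h : ℕ → ℕ} (hh : Apart h) : StrictMono h := by
  intro i j hij
  by_contra! hji
  have := (hh i j hij).trans_le (lam_le_mu (h j))
  exact this.not_ge (Nat.log_mono_right hji)

lemma sum_Ioc_two_pow (a b : ℕ) : ∑ t ∈ Ioc a b, 2 ^ t = 2 ^ (a + 1) * (2 ^ (b - a) - 1) := by
  rw [← Ico_add_one_add_one_eq_Ioc, sum_Ico_eq_sum_range, Nat.add_sub_add_right]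
  simp only [pow_add, ← mul_sum, Nat.geomSum_eq le_rfl, Nat.succ_sub_one, Nat.div_one]

lemma lam_sum_Ioc_two_pow {a b : ℕ} (hab : a < b) : lam (∑ t ∈ Ioc a b, 2 ^ t) = a + 1 := by
  have hodd : ¬ 2 ∣ 2 ^ (b - a) - 1 := by
    have : 2 ∣ 2 ^ (b - a) := dvd_pow_self 2 (by omega)
    have : 2 ≤ 2 ^ (b - a) := Nat.one_lt_two_pow (by omega)
    omega
  rw [lam, sum_Ioc_two_pow, padicValNat.mul (by positivity) (by omega), padicValNat.prime_pow,
    padicValNat.eq_zero_of_not_dvd hodd, add_zero]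

lemma mu_sum_Ioc_two_pow {a b : ℕ} (hab : a < b) : mu (∑ t ∈ Ioc a b, 2 ^ t) = b := by
  apply Nat.log_eq_of_pow_le_of_lt_pow
  · exact single_le_sum (fun _ _ => Nat.zero_le _) (right_mem_Ioc.mpr hab)
  · calc ∑ t ∈ Ioc a b, 2 ^ t = 2 ^ (a + 1) * (2 ^ (b - a) - 1) := sum_Ioc_two_pow a b
      _ < 2 ^ (a + 1) * 2 ^ (b - a) :=
        Nat.mul_lt_mul_of_pos_left (Nat.sub_lt (by positivity) one_pos) (by positivity)
      _ = 2 ^ (b + 1) := by rw [← pow_add]; congr 1; omega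

lemma sum_Icc_sum_Ioc_eq_sum_Ioc {M : Type*} [AddCommMonoid M] (f : ℕ → M) {e : ℕ → ℕ}
    (he : Monotone e) {i j : ℕ} (hij : i ≤ j) :
    ∑ n ∈ Icc i j, ∑ t ∈ Ioc (e n) (e (n + 1)), f t = ∑ t ∈ Ioc (e i) (e (j + 1)), f t := by
  induction j, hij using Nat.le_induction with
  | base => simp
  | succ n hin ih =>
    rw [sum_Icc_succ_top (by omega), ih]
    exact sum_Ioc_consecutive f (he (by omega)) (he (by omega))

theorem homogeneous_gives_aht_witness (c : ℕ → Fin 2) (e : ℕ → ℕ) (d : Fin 2)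
    (hmono : StrictMono e)
    (hhom : ∀ p q, p < q → c (∑ t ∈ Finset.Icc (e p + 1) (e q), 2 ^ t) = d) :
    let h : ℕ → ℕ := fun n => ∑ t ∈ Finset.Icc (e n + 1) (e (n + 1)), 2 ^ t
    Apart h ∧ StrictMono h ∧ ∀ i j, i ≤ j → c (adjSum h i j) = d := by
  intro h
  have hblock : ∀ n, h n = ∑ t ∈ Ioc (e n) (e (n + 1)), 2 ^ t := fun n => by
    simp only [h, Icc_add_one_left_eq_Ioc]
  have hstep : ∀ n, e n < e (n + 1) := fun n => hmono n.lt_succ_self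
  have hapart : Apart h := by
    intro i j hij
    rw [hblock, hblock, mu_sum_Ioc_two_pow (hstep i), lam_sum_Ioc_two_pow (hstep j)]
    exact Nat.lt_succ_of_le (hmono.monotone hij)
  refine ⟨hapart, hapart.strictMono_s5, fun i j hij => ?_⟩
  rw [adjSum, sum_congr rfl fun n _ => hblock n, sum_Icc_sum_Ioc_eq_sum_Ioc _ hmono.monotone hij,
    ← Icc_add_one_left_eq_Ioc]
  exact hhom i (j + 1) (by omega)
end

section
/- Let f : ℕ → ℕ → Fin 2 and define g : ℕ → Fin 2 on positive naturals by g(n) = f(λ(n))(μ(n)) if λ(n) ≠ μ(n) and g(n) = 0 otherwise. Suppose h is a strictly increasing apart sequence of positive naturals with all adjacent sums g-colored d. Then setting H₁ = {λ(h i) : i ∈ ℕ} and H₂ = {μ(h i) : i ∈ ℕ}, the pair (H₁, H₂) is increasing p-homogeneous for f with color d, i.e., f x₁ x₂ = d for all x₁ ∈ H₁, x₂ ∈ H₂ with x₁ < x₂. -/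
/-!
For an apart sequence the binary supports of `h i, h (i+1), …, h j` lie in disjoint, increasing
blocks of bits, so the lowest bit of the sum `h i + ⋯ + h j` is the lowest bit of `h i` and its
highest bit is the highest bit of `h j`: `λ(h i + ⋯ + h j) = λ(h i)` and `μ(h i + ⋯ + h j) = μ(h j)`.
Given `λ(h i) < μ(h j)`, apartness forces `i ≤ j`, and then the colour `d` of that adjacent sum is
`g(h i + ⋯ + h j) = f (λ(h i)) (μ(h j))`.
-/

theorem Nat.add_lt_of_dvd_of_lt {a b c N : ℕ} (hb : c ∣ b) (hN : c ∣ N) (hbN : b < N)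
    (ha : a < c) : a + b < N := by
  obtain ⟨q, rfl⟩ := hb
  obtain ⟨r, rfl⟩ := hN
  have hqr : q < r := Nat.lt_of_mul_lt_mul_left hbN
  calc a + c * q < c * (q + 1) := by rw [mul_add_one]; omega
    _ ≤ c * r := Nat.mul_le_mul_left c hqr

theorem lam_add_of_pow_succ_dvd {n m : ℕ} (hn : n ≠ 0) (hm : 2 ^ (lam n + 1) ∣ m) :
    lam (n + m) = lam n := by
  have hnm : n + m ≠ 0 := by omega
  apply le_antisymm
  · by_contra! hlt
    have hdvd : 2 ^ (lam n + 1) ∣ n + m := (padicValNat_dvd_iff_le hnm).2 hlt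
    exact pow_succ_padicValNat_not_dvd hn ((Nat.dvd_add_left hm).1 hdvd)
  · exact (padicValNat_dvd_iff_le hnm).1
      (dvd_add pow_padicValNat_dvd ((pow_dvd_pow 2 (Nat.le_succ _)).trans hm))

theorem mu_add_of_lt_pow_lam {a b : ℕ} (hb : b ≠ 0) (ha : a < 2 ^ lam b) :
    mu (a + b) = mu b := by
  apply Nat.log_eq_of_pow_le_of_lt_pow
  · exact (Nat.pow_log_le_self 2 hb).trans (Nat.le_add_left b a)
  · exact Nat.add_lt_of_dvd_of_lt pow_padicValNat_dvd
      (pow_dvd_pow 2 ((padicValNat_le_nat_log b).trans (Nat.le_succ _)))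
      (Nat.lt_pow_succ_log_self one_lt_two b) ha

section AdjSum

variable {h : ℕ → ℕ} {i j : ℕ}

theorem adjSum_self (h : ℕ → ℕ) (i : ℕ) : adjSum h i i = h i := by
  simp [adjSum]

theorem adjSum_succ (hij : i ≤ j + 1) : adjSum h i (j + 1) = adjSum h i j + h (j + 1) :=
  Finset.sum_Icc_succ_top hij h

theorem adjSum_pos (hpos : ∀ i, 0 < h i) (hij : i ≤ j) : 0 < adjSum h i j :=
  Finset.sum_pos (fun t _ => hpos t) (Finset.nonempty_Icc.2 hij)

end AdjSum

namespace Apart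

variable {h : ℕ → ℕ} {i j : ℕ}

theorem le_of_lam_lt_mu (hap : Apart h) (hlt : lam (h i) < mu (h j)) : i ≤ j := by
  by_contra! hji
  exact (hap j i hji).not_gt hlt

theorem lam_adjSum (hap : Apart h) (hpos : ∀ i, 0 < h i) (hij : i ≤ j) :
    lam (adjSum h i j) = lam (h i) := by
  induction j, hij using Nat.le_induction with
  | base => rw [adjSum_self]
  | succ j hij ih =>
    have hdvd : 2 ^ (lam (h i) + 1) ∣ h (j + 1) :=
      (pow_dvd_pow 2 ((padicValNat_le_nat_log _).trans_lt (hap i (j + 1) (by omega))))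
        |>.trans pow_padicValNat_dvd
    rw [adjSum_succ (by omega), lam_add_of_pow_succ_dvd (adjSum_pos hpos hij).ne' (ih ▸ hdvd), ih]

theorem mu_adjSum (hap : Apart h) (hpos : ∀ i, 0 < h i) (hij : i ≤ j) :
    mu (adjSum h i j) = mu (h j) := by
  induction j, hij using Nat.le_induction with
  | base => rw [adjSum_self]
  | succ j hij ih =>
    have hlt : adjSum h i j < 2 ^ lam (h (j + 1)) :=
      calc adjSum h i j < 2 ^ (mu (adjSum h i j) + 1) := Nat.lt_pow_succ_log_self one_lt_two _
        _ = 2 ^ (mu (h j) + 1) := by rw [ih]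
        _ ≤ 2 ^ lam (h (j + 1)) := Nat.pow_le_pow_right two_pos (hap j (j + 1) j.lt_succ_self)
    rw [adjSum_succ (by omega), mu_add_of_lt_pow_lam (hpos _).ne' hlt]

end Apart

theorem aht_witness_gives_ipt_witness_general (f : ℕ → ℕ → Fin 2)
    (g : ℕ → Fin 2)
    (hg : ∀ n, g n = if lam n ≠ mu n then f (lam n) (mu n) else 0)
    (h : ℕ → ℕ) (hpos : ∀ i, 0 < h i) (hap : Apart h)
    (d : Fin 2) (hhom : ∀ i j, i ≤ j → g (adjSum h i j) = d) :
    ∀ x₁ ∈ {x | ∃ i, x = lam (h i)}, ∀ x₂ ∈ {x | ∃ i, x = mu (h i)},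
      x₁ < x₂ → f x₁ x₂ = d := by
  rintro _ ⟨i, rfl⟩ _ ⟨j, rfl⟩ hlt
  have hij : i ≤ j := hap.le_of_lam_lt_mu hlt
  have hd := hhom i j hij
  rwa [hg, hap.lam_adjSum hpos hij, hap.mu_adjSum hpos hij, if_pos hlt.ne] at hd

theorem aht_witness_gives_ipt_witness (f : ℕ → ℕ → Fin 2)
    (g : ℕ → Fin 2)
    (hg : ∀ n, g n = if lam n ≠ mu n then f (lam n) (mu n) else 0)
    (h : ℕ → ℕ) (hmono : StrictMono h) (hpos : ∀ i, 0 < h i) (hap : Apart h)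
    (d : Fin 2) (hhom : ∀ i j, i ≤ j → g (adjSum h i j) = d) :
    ∀ x₁ ∈ {x | ∃ i, x = lam (h i)}, ∀ x₂ ∈ {x | ∃ i, x = mu (h i)},
      x₁ < x₂ → f x₁ x₂ = d :=
  aht_witness_gives_ipt_witness_general f g hg h hpos hap d hhom
end
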